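/- Let W be the d-dimensional Brownian sheet with d ≥ 5. Then for every fixed x ∈ ℝ^d and all 0 < a < b, with probability one there is no (s,t) ∈ [a,b]² with W(s,t) = x. -/

import Mathlib

open MeasureTheory ProbabilityTheory Real Filter Set

/-- Covariance of the two-parameter Brownian sheet. -/
noncomputable def sheetCov (p q : ℝ × ℝ) : ℝ := min p.1 q.1 * min p.2 q.2

/-- `W` is a (one-dimensional) two-parameter Brownian sheet: it has continuous sample
paths and centered Gaussian finite-dimensional distributions over `ℝ₊²` with covariance
`E[W s · W t] = (s₁ ∧ t₁)(s₂ ∧ t₂)`. -/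
def IsBrownianSheet {Ω : Type*} [MeasureSpace Ω] (W : ℝ × ℝ → Ω → ℝ) : Prop :=
  (∀ ω, Continuous fun p => W p ω) ∧
  ∀ (n : ℕ) (p : Fin n → ℝ × ℝ) (c : Fin n → ℝ),
    (∀ i, 0 ≤ (p i).1 ∧ 0 ≤ (p i).2) →
    Measure.map (fun ω => ∑ i, c i * W (p i) ω) (ℙ : Measure Ω) =
      gaussianReal 0 (Real.toNNReal (∑ i, ∑ j, c i * c j * sheetCov (p i) (p j)))
/-- `W` is a `d`-dimensional two-parameter Brownian sheet: its coordinates are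
independent one-dimensional Brownian sheets. -/
def IsBrownianSheetD {Ω : Type*} [MeasureSpace Ω] (d : ℕ) (W : ℝ × ℝ → Ω → Fin d → ℝ) :
    Prop :=
  (∀ i : Fin d, IsBrownianSheet fun p ω => W p ω i) ∧
  iIndepFun (m := fun _ : Fin d => (inferInstance : MeasurableSpace (ℝ × ℝ → ℝ)))
    (fun i ω p => W p ω i) (ℙ : Measure Ω)

/-!
Rescale `[a, b]²` to the unit square and chain along dyadic grids. The increment of `W` over an
edge of the level-`k` grid is Gaussian with variance `O(2⁻ᵏ)`, so by a Gaussian tail bound and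
Borel–Cantelli, almost surely all such increments are at most `λₖ = C (3/4)^k` from some level `m`
on. Chaining then puts every value `W p`, `p ∈ [a, b]²`, within `6 λₙ` of the value of `W` at a
level-`n` grid point, for every `n ≥ m`. Hence a hit of `x` forces one of the `(2ⁿ + 1)²` grid
values into the ball of radius `6 λₙ` around `x`. Each coordinate of `W` at a grid point has
density at most `1 / a` and the coordinates are independent, so this has probability
`O((2ⁿ + 1)² (3/4)^(n d)) = O((4 (3/4)^d)ⁿ)`, which tends to `0` because `d ≥ 5`.
-/

open scoped ENNReal NNReal Topology

section Gaussian

lemma gaussianPDFReal_le_inv_sqrt (μ : ℝ) (v : ℝ≥0) (y : ℝ) :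
    gaussianPDFReal μ v y ≤ (√(2 * π * v))⁻¹ := by
  rw [gaussianPDFReal]
  refine mul_le_of_le_one_right (by positivity) (exp_le_one_iff.2 ?_)
  exact div_nonpos_of_nonpos_of_nonneg (neg_nonpos.2 (sq_nonneg _)) (by positivity)

lemma gaussianReal_Icc_le (μ : ℝ) {v : ℝ≥0} (hv : v ≠ 0) (c : ℝ) {ε : ℝ} (hε : 0 ≤ ε) :
    gaussianReal μ v (Icc (c - ε) (c + ε)) ≤ ENNReal.ofReal (ε / √v) := by
  have hv' : (0 : ℝ) < v := by positivity
  have hpeak : 2 * √(v : ℝ) ≤ √(2 * π * v) := by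
    rw [show 2 * √(v : ℝ) = √(2 ^ 2 * v) by rw [sqrt_mul (by positivity), sqrt_sq zero_le_two]]
    exact sqrt_le_sqrt (by nlinarith [pi_gt_three])
  calc gaussianReal μ v (Icc (c - ε) (c + ε))
      = ∫⁻ y in Icc (c - ε) (c + ε), gaussianPDF μ v y := gaussianReal_apply μ hv _
    _ ≤ ∫⁻ _ in Icc (c - ε) (c + ε), ENNReal.ofReal (√(2 * π * v))⁻¹ :=
        lintegral_mono fun y => ENNReal.ofReal_le_ofReal (gaussianPDFReal_le_inv_sqrt μ v y)
    _ = ENNReal.ofReal ((√(2 * π * v))⁻¹ * (2 * ε)) := by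
        rw [setLIntegral_const, Real.volume_Icc, ← ENNReal.ofReal_mul (by positivity)]
        ring_nf
    _ ≤ ENNReal.ofReal (ε / √v) := by
        refine ENNReal.ofReal_le_ofReal ?_
        rw [inv_mul_le_iff₀ (by positivity), mul_div_assoc', le_div_iff₀ (by positivity)]
        nlinarith

lemma hasSubgaussianMGF_gaussianReal_of_le {v c : ℝ≥0} (hvc : v ≤ c) :
    HasSubgaussianMGF id c (gaussianReal 0 v) where
  integrable_exp_mul t := integrable_exp_mul_gaussianReal t
  mgf_le t := by
    simp only [mgf_id_gaussianReal, zero_mul, zero_add]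
    gcongr

lemma ProbabilityTheory.HasSubgaussianMGF.measureReal_le_abs_le {Ω : Type*} [MeasurableSpace Ω]
    {μ : Measure Ω} {X : Ω → ℝ} {c : ℝ≥0} (h : HasSubgaussianMGF X c μ) {ε : ℝ} (hε : 0 ≤ ε) :
    μ.real {ω | ε ≤ |X ω|} ≤ 2 * exp (-ε ^ 2 / (2 * c)) := by
  have hsplit : {ω | ε ≤ |X ω|} = {ω | ε ≤ X ω} ∪ {ω | ε ≤ (-X) ω} := by
    ext ω
    simp only [mem_ofPred_eq, mem_union, le_abs', Pi.neg_apply, le_neg]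
    tauto
  rw [hsplit, two_mul]
  exact (measureReal_union_le _ _).trans
    (add_le_add (h.measure_ge_le hε) (h.neg.measure_ge_le hε))

end Gaussian

section Dyadic

variable {X : Type*} [PseudoMetricSpace X]

noncomputable def dyadicPoint (k i j : ℕ) : ℝ × ℝ := (i / 2 ^ k, j / 2 ^ k)

noncomputable def dyadicApprox (k : ℕ) (p : ℝ × ℝ) : ℝ × ℝ :=
  dyadicPoint k ⌊2 ^ k * p.1⌋₊ ⌊2 ^ k * p.2⌋₊

def DyadicIncrementsLE (f : ℝ × ℝ → X) (k : ℕ) (r : ℝ) : Prop :=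
  ∀ i ≤ 2 ^ k, ∀ j ≤ 2 ^ k,
    dist (f (dyadicPoint k (i + 1) j)) (f (dyadicPoint k i j)) ≤ r ∧
    dist (f (dyadicPoint k i (j + 1))) (f (dyadicPoint k i j)) ≤ r

lemma dyadicPoint_two_mul (k i j : ℕ) :
    dyadicPoint (k + 1) (2 * i) (2 * j) = dyadicPoint k i j := by
  simp only [dyadicPoint, Prod.mk.injEq, pow_succ]
  push_cast
  constructor <;> field_simp

lemma floor_two_pow_succ_mul (k : ℕ) (s : ℝ) :
    ⌊2 ^ (k + 1) * s⌋₊ = 2 * ⌊2 ^ k * s⌋₊ ∨ ⌊2 ^ (k + 1) * s⌋₊ = 2 * ⌊2 ^ k * s⌋₊ + 1 := by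
  have h : ⌊2 ^ k * s⌋₊ = ⌊2 ^ (k + 1) * s⌋₊ / 2 := by
    rw [← Nat.floor_div_natCast]
    congr 1
    push_cast
    ring
  omega

lemma floor_two_pow_mul_le {s : ℝ} (hs : s ≤ 1) (k : ℕ) : ⌊2 ^ k * s⌋₊ ≤ 2 ^ k :=
  Nat.floor_le_of_le (by push_cast; exact mul_le_of_le_one_right (by positivity) hs)

lemma tendsto_floor_two_pow_mul_div {s : ℝ} (hs : 0 ≤ s) :
    Tendsto (fun k : ℕ => (⌊2 ^ k * s⌋₊ : ℝ) / 2 ^ k) atTop (𝓝 s) := by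
  have hlower : Tendsto (fun k : ℕ => s - (1 / 2) ^ k) atTop (𝓝 s) := by
    simpa using tendsto_const_nhds.sub
      (tendsto_pow_atTop_nhds_zero_of_lt_one (by norm_num : (0 : ℝ) ≤ 1 / 2) (by norm_num))
  refine tendsto_of_tendsto_of_tendsto_of_le_of_le hlower tendsto_const_nhds (fun k => ?_)
    (fun k => ?_)
  · rw [one_div_pow, le_div_iff₀ (by positivity), sub_mul, div_mul_cancel₀ _ (by positivity),
      mul_comm]
    linarith [Nat.lt_floor_add_one (2 ^ k * s)]
  · rw [div_le_iff₀ (by positivity), mul_comm]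
    exact Nat.floor_le (by positivity)

lemma dyadicPoint_mem {k i j : ℕ} (hi : i ≤ 2 ^ k) (hj : j ≤ 2 ^ k) :
    dyadicPoint k i j ∈ Icc 0 1 ×ˢ Icc 0 1 := by
  have hi' : (i : ℝ) ≤ 2 ^ k := by exact_mod_cast hi
  have hj' : (j : ℝ) ≤ 2 ^ k := by exact_mod_cast hj
  show (i : ℝ) / 2 ^ k ∈ Icc 0 1 ∧ (j : ℝ) / 2 ^ k ∈ Icc 0 1
  exact ⟨⟨by positivity, div_le_one_of_le₀ hi' (by positivity)⟩,
    ⟨by positivity, div_le_one_of_le₀ hj' (by positivity)⟩⟩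

lemma tendsto_dyadicApprox {p : ℝ × ℝ} (hp : 0 ≤ p) :
    Tendsto (fun k => dyadicApprox k p) atTop (𝓝 p) :=
  (tendsto_floor_two_pow_mul_div hp.1).prodMk_nhds (tendsto_floor_two_pow_mul_div hp.2)

lemma DyadicIncrementsLE.nonneg {f : ℝ × ℝ → X} {k : ℕ} {r : ℝ} (h : DyadicIncrementsLE f k r) :
    0 ≤ r :=
  dist_nonneg.trans (h 0 (Nat.zero_le _) 0 (Nat.zero_le _)).1

lemma DyadicIncrementsLE.dist_dyadicApprox_succ_le {f : ℝ × ℝ → X} {k : ℕ} {r : ℝ}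
    (h : DyadicIncrementsLE f (k + 1) r) {p : ℝ × ℝ} (hp : p ≤ 1) :
    dist (f (dyadicApprox k p)) (f (dyadicApprox (k + 1) p)) ≤ 2 * r := by
  set i := ⌊2 ^ k * p.1⌋₊
  set j := ⌊2 ^ k * p.2⌋₊
  set i' := ⌊2 ^ (k + 1) * p.1⌋₊
  set j' := ⌊2 ^ (k + 1) * p.2⌋₊
  have hi : 2 * i ≤ 2 ^ (k + 1) := by
    rw [pow_succ']; exact Nat.mul_le_mul_left 2 (floor_two_pow_mul_le hp.1 k)
  have hi' : i' ≤ 2 ^ (k + 1) := floor_two_pow_mul_le hp.1 (k + 1)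
  have hj : 2 * j ≤ 2 ^ (k + 1) := by
    rw [pow_succ']; exact Nat.mul_le_mul_left 2 (floor_two_pow_mul_le hp.2 k)
  have hhor :
      dist (f (dyadicPoint (k + 1) i' (2 * j))) (f (dyadicPoint (k + 1) (2 * i) (2 * j))) ≤ r := by
    rcases floor_two_pow_succ_mul k p.1 with h' | h'
    · rw [show i' = 2 * i from h', dist_self]; exact h.nonneg
    · rw [show i' = 2 * i + 1 from h']; exact (h _ hi _ hj).1
  have hver : dist (f (dyadicPoint (k + 1) i' j')) (f (dyadicPoint (k + 1) i' (2 * j))) ≤ r := by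
    rcases floor_two_pow_succ_mul k p.2 with h' | h'
    · rw [show j' = 2 * j from h', dist_self]; exact h.nonneg
    · rw [show j' = 2 * j + 1 from h']; exact (h _ hi' _ hj).2
  calc dist (f (dyadicApprox k p)) (f (dyadicApprox (k + 1) p))
      = dist (f (dyadicPoint (k + 1) (2 * i) (2 * j))) (f (dyadicPoint (k + 1) i' j')) := by
        rw [dyadicPoint_two_mul]; rfl
    _ ≤ r + r := by
        rw [dist_comm]
        exact (dist_triangle _ _ _).trans (add_le_add hver hhor)
    _ = 2 * r := by ring

theorem exists_dyadicPoint_dist_le {f : ℝ × ℝ → X} (hf : ContinuousOn f (Icc 0 1 ×ˢ Icc 0 1))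
    {r : ℕ → ℝ} {m : ℕ} (hinc : ∀ k, m < k → DyadicIncrementsLE f k (r k)) {S : ℝ}
    (hS : ∀ n, ∑ k ∈ Finset.Ico m n, 2 * r (k + 1) ≤ S) {p : ℝ × ℝ}
    (hp : p ∈ Icc 0 1 ×ˢ Icc 0 1) :
    ∃ i ≤ 2 ^ m, ∃ j ≤ 2 ^ m, dist (f (dyadicPoint m i j)) (f p) ≤ S := by
  have hp0 : 0 ≤ p := ⟨hp.1.1, hp.2.1⟩
  have hp1 : p ≤ 1 := ⟨hp.1.2, hp.2.2⟩
  have hchain : ∀ n, m ≤ n → dist (f (dyadicApprox m p)) (f (dyadicApprox n p)) ≤ S :=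
    fun n hn => (dist_le_Ico_sum_of_dist_le hn fun hk _ =>
      (hinc _ (Nat.lt_succ_of_le hk)).dist_dyadicApprox_succ_le hp1).trans (hS n)
  have happrox : Tendsto (fun n => dyadicApprox n p) atTop (𝓝[Icc 0 1 ×ˢ Icc 0 1] p) :=
    tendsto_nhdsWithin_iff.2 ⟨tendsto_dyadicApprox hp0, Eventually.of_forall fun n =>
      dyadicPoint_mem (floor_two_pow_mul_le hp1.1 n) (floor_two_pow_mul_le hp1.2 n)⟩
  have hlim : Tendsto (fun n => dist (f (dyadicApprox m p)) (f (dyadicApprox n p))) atTop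
      (𝓝 (dist (f (dyadicApprox m p)) (f p))) :=
    tendsto_const_nhds.dist ((hf p hp).tendsto.comp happrox)
  exact ⟨_, floor_two_pow_mul_le hp1.1 m, _, floor_two_pow_mul_le hp1.2 m,
    le_of_tendsto hlim (eventually_atTop.2 ⟨m, hchain⟩)⟩

end Dyadic

lemma ProbabilityTheory.HasLaw.of_map_eq {Ω 𝓧 : Type*} [MeasurableSpace Ω] [MeasurableSpace 𝓧]
    {P : Measure Ω} {μ : Measure 𝓧} [NeZero μ] {X : Ω → 𝓧} (h : P.map X = μ) : HasLaw X μ P :=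
  ⟨.of_map_ne_zero (h ▸ NeZero.ne μ), h⟩

section BrownianSheet

variable {Ω : Type*} [MeasureSpace Ω]

noncomputable def sheetIncrementVar (u v : ℝ × ℝ) : ℝ :=
  sheetCov u u + sheetCov v v - 2 * sheetCov u v

lemma sheetIncrementVar_fst {s s' : ℝ} (h : s ≤ s') (t : ℝ) :
    sheetIncrementVar (s', t) (s, t) = (s' - s) * t := by
  simp only [sheetIncrementVar, sheetCov, min_self, min_eq_right h]
  ring

lemma sheetIncrementVar_snd (s : ℝ) {t t' : ℝ} (h : t ≤ t') :
    sheetIncrementVar (s, t') (s, t) = s * (t' - t) := by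
  simp only [sheetIncrementVar, sheetCov, min_self, min_eq_right h]
  ring

namespace IsBrownianSheet

variable {W : ℝ × ℝ → Ω → ℝ}

lemma hasLaw (hW : IsBrownianSheet W) {u : ℝ × ℝ} (hu : 0 ≤ u) :
    HasLaw (W u) (gaussianReal 0 (u.1 * u.2).toNNReal) ℙ :=
  HasLaw.of_map_eq <| by
    simpa [sheetCov] using hW.2 1 (fun _ => u) (fun _ => 1) (fun _ => hu)

lemma hasLaw_sub (hW : IsBrownianSheet W) {u v : ℝ × ℝ} (hu : 0 ≤ u) (hv : 0 ≤ v) :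
    HasLaw (fun ω => W u ω - W v ω) (gaussianReal 0 (sheetIncrementVar u v).toNNReal) ℙ := by
  refine HasLaw.of_map_eq ?_
  have h := hW.2 2 ![u, v] ![1, -1] (fun i => by fin_cases i <;> assumption)
  simp only [Fin.sum_univ_two, Matrix.cons_val_zero, Matrix.cons_val_one, one_mul, neg_one_mul,
    mul_one, mul_neg, neg_neg, ← sub_eq_add_neg] at h
  convert h using 3
  rw [sheetIncrementVar, show sheetCov v u = sheetCov u v by simp only [sheetCov, min_comm]]
  ring

lemma measure_mem_Icc_le (hW : IsBrownianSheet W) {u : ℝ × ℝ} (hu₁ : 0 < u.1) (hu₂ : 0 < u.2)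
    (c : ℝ) {ε : ℝ} (hε : 0 ≤ ε) :
    ℙ {ω | W u ω ∈ Icc (c - ε) (c + ε)} ≤ ENNReal.ofReal (ε / √(u.1 * u.2)) := by
  have hvar : (u.1 * u.2).toNNReal ≠ 0 := by simp [hu₁, hu₂]
  rw [(hW.hasLaw (u := u) ⟨hu₁.le, hu₂.le⟩).measure_eq (p := (· ∈ Icc (c - ε) (c + ε)))
    measurableSet_Icc]
  have h := gaussianReal_Icc_le 0 hvar c hε
  rwa [Real.coe_toNNReal _ (mul_pos hu₁ hu₂).le] at h

lemma measure_le_abs_sub_le [IsProbabilityMeasure (ℙ : Measure Ω)] (hW : IsBrownianSheet W)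
    {u v : ℝ × ℝ} (hu : 0 ≤ u) (hv : 0 ≤ v) {c : ℝ≥0} (hc : sheetIncrementVar u v ≤ c)
    {r : ℝ} (hr : 0 ≤ r) :
    ℙ {ω | r ≤ |W u ω - W v ω|} ≤ ENNReal.ofReal (2 * exp (-r ^ 2 / (2 * c))) := by
  have hlaw := hW.hasLaw_sub hu hv
  have hsub : HasSubgaussianMGF (fun ω => W u ω - W v ω) c ℙ :=
    (HasSubgaussianMGF.id_map_iff hlaw.aemeasurable).1 <| hlaw.map_eq ▸
      hasSubgaussianMGF_gaussianReal_of_le (Real.toNNReal_le_iff_le_coe.2 hc)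
  rw [← ofReal_measureReal]
  exact ENNReal.ofReal_le_ofReal (hsub.measureReal_le_abs_le hr)

end IsBrownianSheet

namespace IsBrownianSheetD

variable {d : ℕ} {W : ℝ × ℝ → Ω → Fin d → ℝ}

lemma measure_dist_le_le (hW : IsBrownianSheetD d W) {u : ℝ × ℝ} (hu₁ : 0 < u.1)
    (hu₂ : 0 < u.2) (x : Fin d → ℝ) {ε : ℝ} (hε : 0 ≤ ε) :
    ℙ {ω | dist (W u ω) x ≤ ε} ≤ ENNReal.ofReal (ε / √(u.1 * u.2)) ^ d := by
  have hset : {ω | dist (W u ω) x ≤ ε} = ⋂ c, {ω | W u ω c ∈ Icc (x c - ε) (x c + ε)} := by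
    ext ω
    simp [dist_pi_le_iff hε, Real.dist_eq, abs_sub_le_iff, add_comm, and_comm]
  rw [hset, hW.2.meas_iInter (s := fun c => {ω | W u ω c ∈ Icc (x c - ε) (x c + ε)})
    fun c => ⟨_, measurable_pi_apply u measurableSet_Icc, rfl⟩]
  calc ∏ c, ℙ {ω | W u ω c ∈ Icc (x c - ε) (x c + ε)}
      ≤ ∏ _c : Fin d, ENNReal.ofReal (ε / √(u.1 * u.2)) :=
        Finset.prod_le_prod' fun c _ => (hW.1 c).measure_mem_Icc_le hu₁ hu₂ (x c) hε
    _ = ENNReal.ofReal (ε / √(u.1 * u.2)) ^ d := by simp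

lemma measure_lt_dist_le [IsProbabilityMeasure (ℙ : Measure Ω)] (hW : IsBrownianSheetD d W)
    {u v : ℝ × ℝ} (hu : 0 ≤ u) (hv : 0 ≤ v) {c : ℝ≥0} (hc : sheetIncrementVar u v ≤ c)
    {r : ℝ} (hr : 0 ≤ r) :
    ℙ {ω | r < dist (W u ω) (W v ω)} ≤ ENNReal.ofReal (d * (2 * exp (-r ^ 2 / (2 * c)))) := by
  have hset : {ω | r < dist (W u ω) (W v ω)} ⊆ ⋃ i, {ω | r ≤ |W u ω i - W v ω i|} := by
    intro ω hω
    simp only [mem_ofPred_eq, ← not_le, dist_pi_le_iff hr, not_forall, Real.dist_eq] at hω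
    obtain ⟨i, hi⟩ := hω
    exact mem_iUnion.2 ⟨i, (not_le.1 hi).le⟩
  calc ℙ {ω | r < dist (W u ω) (W v ω)}
      ≤ ∑ i, ℙ {ω | r ≤ |W u ω i - W v ω i|} :=
        (measure_mono hset).trans (measure_iUnion_fintype_le _ _)
    _ ≤ ∑ _i : Fin d, ENNReal.ofReal (2 * exp (-r ^ 2 / (2 * c))) :=
        Finset.sum_le_sum fun i _ => (hW.1 i).measure_le_abs_sub_le hu hv hc hr
    _ = ENNReal.ofReal (d * (2 * exp (-r ^ 2 / (2 * c)))) := by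
        rw [ENNReal.ofReal_mul (Nat.cast_nonneg d)]
        simp

end IsBrownianSheetD

end BrownianSheet

lemma measure_exists_grid_le {α : Type*} [MeasurableSpace α] (μ : Measure α) {N : ℕ}
    {P : ℕ → ℕ → α → Prop} {β : ℝ} (h : ∀ i ≤ N, ∀ j ≤ N, μ {ω | P i j ω} ≤ ENNReal.ofReal β) :
    μ {ω | ∃ i ≤ N, ∃ j ≤ N, P i j ω} ≤ ENNReal.ofReal ((N + 1) ^ 2 * β) := by
  have hcover : {ω | ∃ i ≤ N, ∃ j ≤ N, P i j ω} ⊆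
      ⋃ i ∈ Finset.range (N + 1), ⋃ j ∈ Finset.range (N + 1), {ω | P i j ω} := by
    rintro ω ⟨i, hi, j, hj, hP⟩
    simp only [mem_iUnion, Finset.mem_range]
    exact ⟨i, by omega, j, by omega, hP⟩
  calc μ {ω | ∃ i ≤ N, ∃ j ≤ N, P i j ω}
      ≤ ∑ i ∈ Finset.range (N + 1), ∑ j ∈ Finset.range (N + 1), μ {ω | P i j ω} :=
        (measure_mono hcover).trans <| (measure_biUnion_finset_le _ _).trans <|
          Finset.sum_le_sum fun i _ => measure_biUnion_finset_le _ _
    _ ≤ ∑ _i ∈ Finset.range (N + 1), ∑ _j ∈ Finset.range (N + 1), ENNReal.ofReal β :=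
        Finset.sum_le_sum fun i hi => Finset.sum_le_sum fun j hj =>
          h i (Nat.le_of_lt_succ (Finset.mem_range.1 hi)) j
            (Nat.le_of_lt_succ (Finset.mem_range.1 hj))
    _ = ENNReal.ofReal ((N + 1) ^ 2 * β) := by
        rw [ENNReal.ofReal_mul (by positivity), ← Nat.cast_add_one, ← Nat.cast_pow,
          ENNReal.ofReal_natCast]
        simp [sq, mul_assoc]

lemma two_pow_add_one_sq_le (k : ℕ) : ((2 : ℝ) ^ k + 1) ^ 2 ≤ 4 * 4 ^ k := by
  have h1 : (1 : ℝ) ≤ 2 ^ k := one_le_pow₀ one_le_two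
  have h4 : (4 : ℝ) ^ k = (2 ^ k) ^ 2 := by rw [← pow_mul, mul_comm, pow_mul]; norm_num
  nlinarith

lemma tendsto_two_pow_add_one_sq_mul_pow {q : ℝ} (hq : 0 ≤ q) {d : ℕ} (hqd : 4 * q ^ d < 1)
    {C : ℝ} (hC : 0 ≤ C) :
    Tendsto (fun n : ℕ => ((2 : ℝ) ^ n + 1) ^ 2 * (C * q ^ n) ^ d) atTop (𝓝 0) := by
  have hgeom : Tendsto (fun n : ℕ => 4 * C ^ d * (4 * q ^ d) ^ n) atTop (𝓝 0) := by
    simpa using (tendsto_pow_atTop_nhds_zero_of_lt_one (by positivity) hqd).const_mul (4 * C ^ d)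
  refine squeeze_zero (fun n => by positivity) (fun n => ?_) hgeom
  calc ((2 : ℝ) ^ n + 1) ^ 2 * (C * q ^ n) ^ d
      ≤ 4 * 4 ^ n * (C * q ^ n) ^ d := by gcongr; exact two_pow_add_one_sq_le n
    _ = 4 * C ^ d * (4 * q ^ d) ^ n := by
        rw [mul_pow, mul_pow, ← pow_mul, ← pow_mul, mul_comm n d]; ring

section SquareGrid

variable {a b : ℝ}

noncomputable def squareMap (a b : ℝ) (q : ℝ × ℝ) : ℝ × ℝ :=
  (a + (b - a) * q.1, a + (b - a) * q.2)

lemma continuous_squareMap (a b : ℝ) : Continuous (squareMap a b) := by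
  unfold squareMap
  fun_prop

lemma exists_squareMap_eq (hab : a < b) {p : ℝ × ℝ} (hp : p ∈ Icc a b ×ˢ Icc a b) :
    ∃ q ∈ Icc 0 1 ×ˢ Icc 0 1, squareMap a b q = p := by
  obtain ⟨⟨h1a, h1b⟩, h2a, h2b⟩ := hp
  have hba : 0 < b - a := sub_pos.2 hab
  refine ⟨((p.1 - a) / (b - a), (p.2 - a) / (b - a)), ⟨⟨?_, ?_⟩, ?_, ?_⟩, ?_⟩
  · exact div_nonneg (by linarith) hba.le
  · exact (div_le_one hba).2 (by linarith)
  · exact div_nonneg (by linarith) hba.le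
  · exact (div_le_one hba).2 (by linarith)
  · ext <;> simp only [squareMap] <;> field_simp <;> ring

lemma squareMap_dyadicPoint (a b : ℝ) (k i j : ℕ) :
    squareMap a b (dyadicPoint k i j) = (a + (b - a) * i / 2 ^ k, a + (b - a) * j / 2 ^ k) := by
  simp only [squareMap, dyadicPoint, mul_div_assoc]

lemma left_le_squareMap_dyadicPoint (hab : a ≤ b) (k i j : ℕ) :
    (a, a) ≤ squareMap a b (dyadicPoint k i j) := by
  have : 0 ≤ b - a := sub_nonneg.2 hab
  rw [squareMap_dyadicPoint]
  constructor <;> simp only [le_add_iff_nonneg_right] <;> positivity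

lemma add_mul_div_two_pow_le (hab : a ≤ b) {k j : ℕ} (hj : j ≤ 2 ^ k) :
    a + (b - a) * j / 2 ^ k ≤ b := by
  have hj' : (j : ℝ) ≤ 2 ^ k := by exact_mod_cast hj
  have : (b - a) * j / 2 ^ k ≤ b - a := by
    rw [div_le_iff₀ (by positivity)]
    exact mul_le_mul_of_nonneg_left hj' (sub_nonneg.2 hab)
  linarith

lemma sheetIncrementVar_squareMap_dyadicPoint_fst_le (hab : a ≤ b) (k i : ℕ) {j : ℕ}
    (hj : j ≤ 2 ^ k) :
    sheetIncrementVar (squareMap a b (dyadicPoint k (i + 1) j))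
      (squareMap a b (dyadicPoint k i j)) ≤ (b - a) * b / 2 ^ k := by
  have hba : 0 ≤ b - a := sub_nonneg.2 hab
  rw [squareMap_dyadicPoint, squareMap_dyadicPoint, sheetIncrementVar_fst (by gcongr; simp)]
  calc (a + (b - a) * ↑(i + 1) / 2 ^ k - (a + (b - a) * i / 2 ^ k)) * (a + (b - a) * j / 2 ^ k)
      = (b - a) / 2 ^ k * (a + (b - a) * j / 2 ^ k) := by push_cast; ring
    _ ≤ (b - a) / 2 ^ k * b := by gcongr; exact add_mul_div_two_pow_le hab hj
    _ = (b - a) * b / 2 ^ k := by ring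

lemma sheetIncrementVar_squareMap_dyadicPoint_snd_le (hab : a ≤ b) {k i : ℕ} (hi : i ≤ 2 ^ k)
    (j : ℕ) :
    sheetIncrementVar (squareMap a b (dyadicPoint k i (j + 1)))
      (squareMap a b (dyadicPoint k i j)) ≤ (b - a) * b / 2 ^ k := by
  have hba : 0 ≤ b - a := sub_nonneg.2 hab
  rw [squareMap_dyadicPoint, squareMap_dyadicPoint, sheetIncrementVar_snd _ (by gcongr; simp)]
  calc (a + (b - a) * i / 2 ^ k) * (a + (b - a) * ↑(j + 1) / 2 ^ k - (a + (b - a) * j / 2 ^ k))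
      = (a + (b - a) * i / 2 ^ k) * ((b - a) / 2 ^ k) := by push_cast; ring
    _ ≤ b * ((b - a) / 2 ^ k) := by gcongr; exact add_mul_div_two_pow_le hab hi
    _ = (b - a) * b / 2 ^ k := by ring

/-- The increments of `W` over the edges of the level-`k` grid on `[a, b]²` have variance at most
`(b - a) b / 2 ^ k`, so the ratio `3/4 > 1/√2` makes their Gaussian tails `exp (-32 (9/8)^k)`
summable against the `4 ^ k` edges, while the small-ball estimate at level `n`, of order
`(4 (3/4)^d)ⁿ`, still tends to `0` when `d ≥ 5`. -/
noncomputable def incrementBound (a b : ℝ) (k : ℕ) : ℝ := 8 * √((b - a) * b) * (3 / 4) ^ k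

lemma sum_incrementBound_le (a b : ℝ) (m n : ℕ) :
    ∑ k ∈ Finset.Ico m n, 2 * incrementBound a b (k + 1) ≤ 6 * incrementBound a b m := by
  have hgeom := geom_sum_Ico_le_of_lt_one (m := m) (n := n) (by norm_num : (0 : ℝ) ≤ 3 / 4)
    (by norm_num)
  calc ∑ k ∈ Finset.Ico m n, 2 * incrementBound a b (k + 1)
      = 12 * √((b - a) * b) * ∑ k ∈ Finset.Ico m n, (3 / 4 : ℝ) ^ k := by
        rw [Finset.mul_sum]
        refine Finset.sum_congr rfl fun k _ => ?_
        rw [incrementBound, pow_succ]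
        ring
    _ ≤ 12 * √((b - a) * b) * ((3 / 4) ^ m / (1 - 3 / 4)) := by gcongr
    _ = 6 * incrementBound a b m := by rw [incrementBound]; ring

lemma incrementBound_nonneg (a b : ℝ) (k : ℕ) : 0 ≤ incrementBound a b k := by
  unfold incrementBound
  positivity

lemma tendsto_two_pow_add_one_sq_mul_incrementBound_pow (ha : 0 ≤ a) (b : ℝ) {d : ℕ}
    (hd : 5 ≤ d) :
    Tendsto (fun n => ((2 : ℝ) ^ n + 1) ^ 2 * (6 * incrementBound a b n / a) ^ d) atTop
      (𝓝 0) := by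
  have h4 : 4 * (3 / 4 : ℝ) ^ d < 1 := by
    have := pow_le_pow_of_le_one (by norm_num : (0 : ℝ) ≤ 3 / 4) (by norm_num) hd
    norm_num at this ⊢
    linarith
  refine (tendsto_two_pow_add_one_sq_mul_pow (by norm_num) h4
    (by positivity : 0 ≤ 48 * √((b - a) * b) / a)).congr fun n => ?_
  rw [incrementBound]
  ring

lemma exp_neg_incrementBound_sq_le (hab : a < b) (hb : 0 < b) (k : ℕ) :
    exp (-incrementBound a b k ^ 2 / (2 * ((b - a) * b / 2 ^ k))) ≤ (1 / 5) ^ k := by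
  have hba : b - a ≠ 0 := (sub_pos.2 hab).ne'
  have hab' : 0 < (b - a) * b := mul_pos (sub_pos.2 hab) hb
  have hratio : incrementBound a b k ^ 2 / (2 * ((b - a) * b / 2 ^ k)) = 32 * (9 / 8) ^ k := by
    rw [incrementBound, mul_pow, mul_pow, sq_sqrt hab'.le, ← pow_mul, mul_comm k 2, pow_mul,
      show (9 / 8 : ℝ) ^ k = ((3 / 4) ^ 2) ^ k * 2 ^ k by rw [← mul_pow]; norm_num]
    field_simp
    ring
  have hbern : 1 + k * (1 / 8 : ℝ) ≤ (9 / 8) ^ k := by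
    have h := one_add_mul_le_pow (by norm_num : (-2 : ℝ) ≤ 1 / 8) k
    rwa [show (1 : ℝ) + 1 / 8 = 9 / 8 by norm_num] at h
  have h5 : exp (-4) ≤ 1 / 5 := by
    rw [exp_neg, one_div]
    exact inv_anti₀ (by norm_num) (by linarith [add_one_le_exp 4])
  calc exp (-incrementBound a b k ^ 2 / (2 * ((b - a) * b / 2 ^ k)))
      ≤ exp (-4) ^ k := by
        rw [neg_div, hratio, ← exp_nat_mul, exp_le_exp]
        nlinarith
    _ ≤ (1 / 5) ^ k := by gcongr

end SquareGrid

namespace IsBrownianSheetD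

variable {Ω : Type*} [MeasureSpace Ω] {d : ℕ}
  {W : ℝ × ℝ → Ω → Fin d → ℝ} {a b : ℝ}

lemma measure_incrementBound_lt_dist_le [IsProbabilityMeasure (ℙ : Measure Ω)]
    (hW : IsBrownianSheetD d W) (ha : 0 < a) (hab : a < b) {k : ℕ} {u v : ℝ × ℝ} (hu : 0 ≤ u)
    (hv : 0 ≤ v) (huv : sheetIncrementVar u v ≤ (b - a) * b / 2 ^ k) :
    ℙ {ω | incrementBound a b k < dist (W u ω) (W v ω)}
      ≤ ENNReal.ofReal (d * (2 * (1 / 5) ^ k)) := by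
  have hb : 0 < b := ha.trans hab
  have hc : (((b - a) * b / 2 ^ k).toNNReal : ℝ) = (b - a) * b / 2 ^ k :=
    Real.coe_toNNReal _ (div_nonneg (mul_nonneg (sub_pos.2 hab).le hb.le) (by positivity))
  refine (hW.measure_lt_dist_le hu hv (hc ▸ huv) (incrementBound_nonneg a b k)).trans
    (ENNReal.ofReal_le_ofReal ?_)
  rw [hc]
  gcongr
  exact exp_neg_incrementBound_sq_le hab hb k

lemma measure_not_dyadicIncrementsLE_le [IsProbabilityMeasure (ℙ : Measure Ω)]
    (hW : IsBrownianSheetD d W) (ha : 0 < a) (hab : a < b) (k : ℕ) :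
    ℙ {ω | ¬ DyadicIncrementsLE (fun q => W (squareMap a b q) ω) k (incrementBound a b k)}
      ≤ ENNReal.ofReal (16 * d * (4 / 5) ^ k) := by
  set r := incrementBound a b k
  have hpos : ∀ i j, 0 ≤ squareMap a b (dyadicPoint k i j) := fun i j =>
    le_trans ⟨ha.le, ha.le⟩ (left_le_squareMap_dyadicPoint hab.le k i j)
  calc ℙ {ω | ¬ DyadicIncrementsLE (fun q => W (squareMap a b q) ω) k r}
      = ℙ {ω | ∃ i ≤ 2 ^ k, ∃ j ≤ 2 ^ k,
          ¬ (dist (W (squareMap a b (dyadicPoint k (i + 1) j)) ω)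
                (W (squareMap a b (dyadicPoint k i j)) ω) ≤ r ∧
             dist (W (squareMap a b (dyadicPoint k i (j + 1))) ω)
                (W (squareMap a b (dyadicPoint k i j)) ω) ≤ r)} := by
        simp only [DyadicIncrementsLE, not_forall, exists_prop]
    _ ≤ ENNReal.ofReal ((((2 ^ k : ℕ) : ℝ) + 1) ^ 2 * (2 * (d * (2 * (1 / 5) ^ k)))) := by
        refine measure_exists_grid_le ℙ fun i hi j hj => ?_
        rw [two_mul, ENNReal.ofReal_add (by positivity) (by positivity)]
        have hhor := hW.measure_incrementBound_lt_dist_le ha hab (hpos (i + 1) j) (hpos i j)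
          (sheetIncrementVar_squareMap_dyadicPoint_fst_le hab.le k i hj)
        have hver := hW.measure_incrementBound_lt_dist_le ha hab (hpos i (j + 1)) (hpos i j)
          (sheetIncrementVar_squareMap_dyadicPoint_snd_le hab.le hi j)
        refine (measure_mono fun ω hω => ?_).trans
          ((measure_union_le _ _).trans (add_le_add hhor hver))
        simpa only [mem_ofPred_eq, mem_union, not_and_or, not_le] using hω
    _ ≤ ENNReal.ofReal (16 * d * (4 / 5) ^ k) := by
        refine ENNReal.ofReal_le_ofReal ?_
        push_cast
        calc ((2 : ℝ) ^ k + 1) ^ 2 * (2 * (d * (2 * (1 / 5) ^ k)))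
            ≤ 4 * 4 ^ k * (2 * (d * (2 * (1 / 5) ^ k))) := by
              gcongr; exact two_pow_add_one_sq_le k
          _ = 16 * d * (4 / 5) ^ k := by rw [div_pow, div_pow]; field_simp; ring

lemma ae_eventually_dyadicIncrementsLE [IsProbabilityMeasure (ℙ : Measure Ω)]
    (hW : IsBrownianSheetD d W) (ha : 0 < a) (hab : a < b) :
    ∀ᵐ ω, ∀ᶠ k in atTop,
      DyadicIncrementsLE (fun q => W (squareMap a b q) ω) k (incrementBound a b k) := by
  have hsum : ∑' k, ℙ {ω | ¬ DyadicIncrementsLE (fun q => W (squareMap a b q) ω) k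
      (incrementBound a b k)} ≠ ∞ := by
    refine ne_top_of_le_ne_top ?_
      (ENNReal.tsum_le_tsum (hW.measure_not_dyadicIncrementsLE_le ha hab))
    rw [← ENNReal.ofReal_tsum_of_nonneg (fun k => by positivity)
      ((summable_geometric_of_lt_one (by norm_num) (by norm_num)).mul_left _)]
    exact ENNReal.ofReal_ne_top
  filter_upwards [ae_eventually_notMem hsum] with ω hω
  simpa using hω

lemma measure_exists_dyadicPoint_dist_le_le (hW : IsBrownianSheetD d W) (ha : 0 < a)
    (hab : a ≤ b) (x : Fin d → ℝ) (n : ℕ) {ε : ℝ} (hε : 0 ≤ ε) :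
    ℙ {ω | ∃ i ≤ 2 ^ n, ∃ j ≤ 2 ^ n, dist (W (squareMap a b (dyadicPoint n i j)) ω) x ≤ ε}
      ≤ ENNReal.ofReal (((2 : ℝ) ^ n + 1) ^ 2 * (ε / a) ^ d) := by
  have hgrid := measure_exists_grid_le ℙ (N := 2 ^ n) (β := (ε / a) ^ d) fun i _ j _ => by
    have hu := left_le_squareMap_dyadicPoint hab n i j
    have hsqrt : a ≤ √((squareMap a b (dyadicPoint n i j)).1 *
        (squareMap a b (dyadicPoint n i j)).2) :=
      (le_sqrt ha.le (by nlinarith [hu.1, hu.2])).2 (by nlinarith [hu.1, hu.2])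
    refine (hW.measure_dist_le_le (ha.trans_le hu.1) (ha.trans_le hu.2) x hε).trans ?_
    rw [← ENNReal.ofReal_pow (by positivity)]
    exact ENNReal.ofReal_le_ofReal
      (pow_le_pow_left₀ (by positivity) (div_le_div_of_nonneg_left hε ha hsqrt) d)
  push_cast at hgrid
  exact hgrid

lemma ae_forall_ne_of_dyadicIncrementsLE (hW : IsBrownianSheetD d W) (hd : 5 ≤ d) (ha : 0 < a)
    (hab : a < b) (x : Fin d → ℝ) (m : ℕ) :
    ∀ᵐ ω, (∀ k, m < k →
      DyadicIncrementsLE (fun q => W (squareMap a b q) ω) k (incrementBound a b k)) →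
      ∀ p ∈ Icc a b ×ˢ Icc a b, W p ω ≠ x := by
  set A := {ω | (∀ k, m < k →
      DyadicIncrementsLE (fun q => W (squareMap a b q) ω) k (incrementBound a b k)) ∧
      ∃ p ∈ Icc a b ×ˢ Icc a b, W p ω = x}
  have hcover : ∀ n, m ≤ n → A ⊆ {ω | ∃ i ≤ 2 ^ n, ∃ j ≤ 2 ^ n,
      dist (W (squareMap a b (dyadicPoint n i j)) ω) x ≤ 6 * incrementBound a b n} := by
    rintro n hn ω ⟨hinc, p, hp, rfl⟩
    obtain ⟨q, hq, rfl⟩ := exists_squareMap_eq hab hp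
    exact exists_dyadicPoint_dist_le
      (continuous_pi fun i => ((hW.1 i).1 ω).comp (continuous_squareMap a b)).continuousOn
      (fun k hk => hinc k (hn.trans_lt hk)) (sum_incrementBound_le a b n) hq
  have hbound : ∀ n, m ≤ n →
      ℙ A ≤ ENNReal.ofReal (((2 : ℝ) ^ n + 1) ^ 2 * (6 * incrementBound a b n / a) ^ d) :=
    fun n hn => (measure_mono (hcover n hn)).trans
      (hW.measure_exists_dyadicPoint_dist_le_le ha hab.le x n
        (mul_nonneg (by norm_num) (incrementBound_nonneg a b n)))
  have hlim : Tendsto (fun n => ENNReal.ofReal (((2 : ℝ) ^ n + 1) ^ 2 *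
      (6 * incrementBound a b n / a) ^ d)) atTop (𝓝 0) := by
    rw [← ENNReal.ofReal_zero]
    exact ENNReal.tendsto_ofReal (tendsto_two_pow_add_one_sq_mul_incrementBound_pow ha.le b hd)
  have hA : ℙ A = 0 := nonpos_iff_eq_zero.1 (ge_of_tendsto hlim (eventually_atTop.2 ⟨m, hbound⟩))
  filter_upwards [measure_eq_zero_iff_ae_notMem.1 hA] with ω hω hinc p hp hpx
  exact hω ⟨hinc, p, hp, hpx⟩

end IsBrownianSheetD

/-- For the `d`-dimensional Brownian sheet with `d ≥ 5` and fixed `x ∈ ℝ^d` and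
`0 < a < b`, almost surely `W` does not hit `x` on `[a,b]²`. -/
theorem sheet_does_not_hit_point
    {Ω : Type*} [MeasureSpace Ω] [IsProbabilityMeasure (ℙ : Measure Ω)]
    (d : ℕ) (hd : 5 ≤ d)
    (W : ℝ × ℝ → Ω → Fin d → ℝ) (hW : IsBrownianSheetD d W) (x : Fin d → ℝ)
    (a b : ℝ) (ha : 0 < a) (hab : a < b) :
    ∀ᵐ ω ∂(ℙ : Measure Ω), ∀ p ∈ Icc a b ×ˢ Icc a b, W p ω ≠ x := by
  filter_upwards [hW.ae_eventually_dyadicIncrementsLE ha hab,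
    ae_all_iff.2 (hW.ae_forall_ne_of_dyadicIncrementsLE hd ha hab x)] with ω hgood hnohit
  obtain ⟨m, hm⟩ := eventually_atTop.1 hgood
  exact hnohit m fun k hk => hm k hk.le
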